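/- arXiv:1811.11373 — 7 statements merged into one kernel-verified Lean document; each statement's English description precedes it below -/
import Mathlib

section
/- Exactness of the big-M ReLU encoding: let x, y, M be real numbers with |x| ≤ M. Then y = max 0 x if and only if there exists a real number δ with (δ = 0 or δ = 1) such that y ≥ 0, y ≥ x, y ≤ x + M·δ, and y ≤ M·(1 − δ). -/
/-!
`y = max 0 x` means that `y` lies above both `0` and `x` and below one of them. The binary `δ`
selects which: `δ = 1` forces `y ≤ 0`, `δ = 0` forces `y ≤ x`, and `|x| ≤ M` makes the other
big-M row slack.
-/

theorem eq_max_iff_le_and_le_or_le {α : Type*} [LinearOrder α] {a b c : α} :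
    c = max a b ↔ a ≤ c ∧ b ≤ c ∧ (c ≤ a ∨ c ≤ b) := by
  constructor
  · rintro rfl
    exact ⟨le_max_left a b, le_max_right a b, (max_choice a b).imp le_of_eq le_of_eq⟩
  · rintro ⟨hac, hbc, hca | hcb⟩
    · exact le_antisymm (le_max_of_le_left hca) (max_le hac hbc)
    · exact le_antisymm (le_max_of_le_right hcb) (max_le hac hbc)

/-- Exactness of the big-M ReLU encoding. -/
theorem bigM_relu_exact (x y M : ℝ) (hM : |x| ≤ M) :
    y = max 0 x ↔
      ∃ δ : ℝ, (δ = 0 ∨ δ = 1) ∧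
        y ≥ 0 ∧ y ≥ x ∧ y ≤ x + M * δ ∧ y ≤ M * (1 - δ) := by
  obtain ⟨hMx, hxM⟩ := abs_le.mp hM
  rw [eq_max_iff_le_and_le_or_le]
  constructor
  · rintro ⟨hy0, hxy, hy_nonpos | hyx⟩
    · exact ⟨1, Or.inr rfl, hy0, hxy, by linarith, by linarith⟩
    · exact ⟨0, Or.inl rfl, hy0, hxy, by linarith, by linarith⟩
  · rintro ⟨δ, rfl | rfl, hy0, hxy, hyx, hyM⟩
    · exact ⟨hy0, hxy, Or.inr (by simpa using hyx)⟩
    · exact ⟨hy0, hxy, Or.inl (by simpa using hyM)⟩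
end

section
/- Exactness of the big-M encoding of a fully connected ReLU layer: let W be a real m × n matrix, b : Fin m → ℝ a bias vector, x : Fin n → ℝ an input, y : Fin m → ℝ, and M a real number such that |(W.mulVec x) j + b j| ≤ M for every j. Then (for all j, y j = max 0 ((W.mulVec x) j + b j)) if and only if there exists δ : Fin m → ℝ such that for every j: (δ j = 0 or δ j = 1), y j ≥ 0, y j ≥ (W.mulVec x) j + b j, y j ≤ (W.mulVec x) j + b j + M·(δ j), and y j ≤ M·(1 − δ j). -/
/-- `δ = 1` forces `y = 0` and `δ = 0` forces `y = t`; the bound `|t| ≤ M` keeps the other constraint slack. -/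
def IsBigMReLU (M t y δ : ℝ) : Prop :=
  (δ = 0 ∨ δ = 1) ∧ y ≥ 0 ∧ y ≥ t ∧ y ≤ t + M * δ ∧ y ≤ M * (1 - δ)

namespace IsBigMReLU

theorem eq_max_zero {M t y δ : ℝ} (h : IsBigMReLU M t y δ) : y = max 0 t := by
  obtain ⟨hδ, hy_nonneg, hy_ge, hy_le_add, hy_le_mul⟩ := h
  refine le_antisymm ?_ (max_le hy_nonneg hy_ge)
  rcases hδ with rfl | rfl
  · exact (by simpa using hy_le_add : y ≤ t).trans (le_max_right 0 t)
  · exact (by simpa using hy_le_mul : y ≤ 0).trans (le_max_left 0 t)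

theorem of_eq_max_zero {M t y : ℝ} (hM : |t| ≤ M) (hy : y = max 0 t) :
    IsBigMReLU M t y (if t ≤ 0 then 1 else 0) := by
  obtain ⟨hM_neg, hM_pos⟩ := abs_le.mp hM
  subst hy
  by_cases ht : t ≤ 0
  · simp only [if_pos ht, max_eq_left ht]
    exact ⟨Or.inr rfl, le_rfl, ht, by linarith, by linarith⟩
  · simp only [if_neg ht, max_eq_right (le_of_not_ge ht)]
    exact ⟨Or.inl rfl, le_of_not_ge ht, le_rfl, by linarith, by linarith⟩

theorem exists_iff_eq_max_zero {M t y : ℝ} (hM : |t| ≤ M) :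
    (∃ δ, IsBigMReLU M t y δ) ↔ y = max 0 t :=
  ⟨fun ⟨_, h⟩ => h.eq_max_zero, fun hy => ⟨_, of_eq_max_zero hM hy⟩⟩

end IsBigMReLU

/-- Exactness of the big-M encoding of a fully connected ReLU layer. -/
theorem bigM_fc_layer_exact (m n : ℕ) (W : Matrix (Fin m) (Fin n) ℝ)
    (b : Fin m → ℝ) (x : Fin n → ℝ) (y : Fin m → ℝ) (M : ℝ)
    (hM : ∀ j, |W.mulVec x j + b j| ≤ M) :
    (∀ j, y j = max 0 (W.mulVec x j + b j)) ↔
      ∃ δ : Fin m → ℝ, ∀ j,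
        (δ j = 0 ∨ δ j = 1) ∧
        y j ≥ 0 ∧
        y j ≥ W.mulVec x j + b j ∧
        y j ≤ W.mulVec x j + b j + M * δ j ∧
        y j ≤ M * (1 - δ j) :=
  (forall_congr' fun j => (IsBigMReLU.exists_iff_eq_max_zero (hM j)).symm).trans
    Classical.skolem
end

section
/- Exactness of the big-M encoding for a composition of two fully connected ReLU layers: let W₁ be a real h × n matrix with bias b₁ : Fin h → ℝ, W₂ a real m × h matrix with bias b₂ : Fin m → ℝ, x : Fin n → ℝ, z : Fin m → ℝ, and M a real number such that |(W₁.mulVec x) j + b₁ j| ≤ M for every j and |(W₂.mulVec (fun j => max 0 ((W₁.mulVec x) j + b₁ j))) i + b₂ i| ≤ M for every i. Then z equals the composed network output (for all i, z i = max 0 ((W₂.mulVec (fun j => max 0 ((W₁.mulVec x) j + b₁ j))) i + b₂ i)) if and only if there exist y : Fin h → ℝ, δ¹ : Fin h → ℝ, δ² : Fin m → ℝ such that for every j: (δ¹ j = 0 or δ¹ j = 1), y j ≥ 0, y j ≥ (W₁.mulVec x) j + b₁ j, y j ≤ (W₁.mulVec x) j + b₁ j + M·(δ¹ j), y j ≤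 M·(1 − δ¹ j), and for every i: (δ² i = 0 or δ² i = 1), z i ≥ 0, z i ≥ (W₂.mulVec y) i + b₂ i, z i ≤ (W₂.mulVec y) i + b₂ i + M·(δ² i), z i ≤ M·(1 − δ² i). -/
/-!
With `δ = 0` the big-M constraints squeeze `y` between `a` and `a`, with `δ = 1` between `0` and
`0`, and the remaining constraints then fix the sign of `a`; either way `y = max 0 a`. Conversely,
when `|a| ≤ M`, taking `δ = 0` for `a ≥ 0` and `δ = 1` for `a < 0` makes `y = max 0 a` feasible.
Applied node by node, first to the hidden layer (which pins `y` to its ReLU output) and then to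
the output layer, this gives exactness of the two-layer encoding.
-/

def BigMReLU (M a y δ : ℝ) : Prop :=
  (δ = 0 ∨ δ = 1) ∧ y ≥ 0 ∧ y ≥ a ∧ y ≤ a + M * δ ∧ y ≤ M * (1 - δ)

theorem BigMReLU.eq_max {M a y δ : ℝ} (h : BigMReLU M a y δ) : y = max 0 a := by
  obtain ⟨hδ, hy₀, hya, hy_le_a, hy_le_M⟩ := h
  rcases hδ with rfl | rfl
  · have hy : y = a := le_antisymm (by linarith) hya
    rw [hy, max_eq_right (by linarith)]
  · have hy : y = 0 := le_antisymm (by linarith) hy₀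
    rw [hy, max_eq_left (by linarith)]

theorem bigMReLU_max_of_abs_le {M a : ℝ} (hM : |a| ≤ M) :
    ∃ δ, BigMReLU M a (max 0 a) δ := by
  obtain ⟨hMa, haM⟩ := abs_le.mp hM
  rcases le_or_gt 0 a with ha | ha
  · refine ⟨0, Or.inl rfl, le_max_left _ _, le_max_right _ _, ?_, ?_⟩ <;>
      rw [max_eq_right ha] <;> linarith
  · refine ⟨1, Or.inr rfl, le_max_left _ _, le_max_right _ _, ?_, ?_⟩ <;>
      rw [max_eq_left ha.le] <;> linarith

theorem exists_bigMReLU_iff {M a y : ℝ} (hM : |a| ≤ M) :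
    (∃ δ, BigMReLU M a y δ) ↔ y = max 0 a := by
  constructor
  · rintro ⟨δ, h⟩
    exact h.eq_max
  · rintro rfl
    exact bigMReLU_max_of_abs_le hM

theorem exists_forall_bigMReLU_iff {ι : Type*} {M : ℝ} {a y : ι → ℝ} (hM : ∀ j, |a j| ≤ M) :
    (∃ δ : ι → ℝ, ∀ j, BigMReLU M (a j) (y j) (δ j)) ↔ y = fun j => max 0 (a j) := by
  rw [← Classical.skolem, funext_iff]
  exact forall_congr' fun j => exists_bigMReLU_iff (hM j)

/-- Exactness of the big-M encoding for a composition of two fully connected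
ReLU layers. -/
theorem bigM_two_layer_exact (n h m : ℕ)
    (W₁ : Matrix (Fin h) (Fin n) ℝ) (b₁ : Fin h → ℝ)
    (W₂ : Matrix (Fin m) (Fin h) ℝ) (b₂ : Fin m → ℝ)
    (x : Fin n → ℝ) (z : Fin m → ℝ) (M : ℝ)
    (hM₁ : ∀ j, |W₁.mulVec x j + b₁ j| ≤ M)
    (hM₂ : ∀ i, |W₂.mulVec (fun j => max 0 (W₁.mulVec x j + b₁ j)) i + b₂ i| ≤ M) :
    (∀ i, z i = max 0 (W₂.mulVec (fun j => max 0 (W₁.mulVec x j + b₁ j)) i + b₂ i)) ↔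
      ∃ (y : Fin h → ℝ) (δ₁ : Fin h → ℝ) (δ₂ : Fin m → ℝ),
        (∀ j,
          (δ₁ j = 0 ∨ δ₁ j = 1) ∧
          y j ≥ 0 ∧
          y j ≥ W₁.mulVec x j + b₁ j ∧
          y j ≤ W₁.mulVec x j + b₁ j + M * δ₁ j ∧
          y j ≤ M * (1 - δ₁ j)) ∧
        (∀ i,
          (δ₂ i = 0 ∨ δ₂ i = 1) ∧
          z i ≥ 0 ∧
          z i ≥ W₂.mulVec y i + b₂ i ∧
          z i ≤ W₂.mulVec y i + b₂ i + M * δ₂ i ∧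
          z i ≤ M * (1 - δ₂ i)) := by
  change _ ↔ ∃ (y : Fin h → ℝ) (δ₁ : Fin h → ℝ) (δ₂ : Fin m → ℝ),
    (∀ j, BigMReLU M (W₁.mulVec x j + b₁ j) (y j) (δ₁ j)) ∧
      ∀ i, BigMReLU M (W₂.mulVec y i + b₂ i) (z i) (δ₂ i)
  constructor
  · intro hz
    obtain ⟨δ₁, h₁⟩ := (exists_forall_bigMReLU_iff hM₁).2 rfl
    obtain ⟨δ₂, h₂⟩ := (exists_forall_bigMReLU_iff hM₂).2 (funext hz)
    exact ⟨_, δ₁, δ₂, h₁, h₂⟩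
  · rintro ⟨y, δ₁, δ₂, h₁, h₂⟩
    obtain rfl := (exists_forall_bigMReLU_iff hM₁).1 ⟨δ₁, h₁⟩
    exact fun i => (h₂ i).eq_max
end

section
/- Exactness of the two-binary-variable encoding of max-pooling over four values: let x₁, x₂, x₃, x₄, y, M be real numbers with M ≥ xᵢ − xⱼ for all i, j ∈ {1,2,3,4}. Then y = max (max x₁ x₂) (max x₃ x₄) if and only if there exist real numbers δ₁, δ₂, each equal to 0 or 1, such that y ≥ xⱼ for j = 1,2,3,4, and y ≤ x₁ + M·(δ₁ + δ₂), y ≤ x₂ + M·(1 − δ₁ + δ₂), y ≤ x₃ + M·(δ₁ + 1 − δ₂), y ≤ x₄ + M·(1 − δ₁ + 1 − δ₂). -/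
/-!
Each of the four binary choices of `(δ₁, δ₂)` makes exactly one of the four coefficients of `M`
vanish and the other three at least `1`. So the constraints say `y ≤ xᵢ` for the selected `i`,
which together with the lower bounds characterises the maximum, while the other three are
slack because `M` bounds every difference `xᵢ - xⱼ` (and hence is nonnegative).
-/

theorem le_add_mul_of_forall_sub_le {α : Type*} [Ring α] [PartialOrder α] [IsOrderedRing α]
    {S : Set α} {M : α} (hM : ∀ a ∈ S, ∀ b ∈ S, M ≥ a - b) {a b c : α}
    (ha : a ∈ S) (hb : b ∈ S) (hc : 1 ≤ c) : a ≤ b + M * c := by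
  have hM₀ : 0 ≤ M := by simpa using hM a ha a ha
  calc a = b + (a - b) := by abel
    _ ≤ b + M := by gcongr; exact hM a ha b hb
    _ ≤ b + M * c := by gcongr; exact le_mul_of_one_le_right hM₀ hc

theorem eq_max_max_iff {α : Type*} [LinearOrder α] {y a b c d : α} :
    y = max (max a b) (max c d) ↔
      (a ≤ y ∧ b ≤ y ∧ c ≤ y ∧ d ≤ y) ∧ (y ≤ a ∨ y ≤ b ∨ y ≤ c ∨ y ≤ d) := by
  rw [le_antisymm_iff, le_max_iff, le_max_iff, le_max_iff, max_le_iff, max_le_iff, max_le_iff]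
  tauto

/-- Exactness of the two-binary-variable encoding of max-pooling over four
values. -/
theorem maxpool4_exact (x₁ x₂ x₃ x₄ y M : ℝ)
    (hM : ∀ a ∈ ({x₁, x₂, x₃, x₄} : Set ℝ), ∀ b ∈ ({x₁, x₂, x₃, x₄} : Set ℝ),
      M ≥ a - b) :
    y = max (max x₁ x₂) (max x₃ x₄) ↔
      ∃ δ₁ δ₂ : ℝ, (δ₁ = 0 ∨ δ₁ = 1) ∧ (δ₂ = 0 ∨ δ₂ = 1) ∧
        y ≥ x₁ ∧ y ≥ x₂ ∧ y ≥ x₃ ∧ y ≥ x₄ ∧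
        y ≤ x₁ + M * (δ₁ + δ₂) ∧
        y ≤ x₂ + M * (1 - δ₁ + δ₂) ∧
        y ≤ x₃ + M * (δ₁ + 1 - δ₂) ∧
        y ≤ x₄ + M * (1 - δ₁ + 1 - δ₂) := by
  rw [eq_max_max_iff]
  constructor
  · rintro ⟨⟨h₁, h₂, h₃, h₄⟩, hy | hy | hy | hy⟩
    on_goal 1 => obtain rfl := le_antisymm hy h₁; refine ⟨0, 0, ?_⟩
    on_goal 2 => obtain rfl := le_antisymm hy h₂; refine ⟨1, 0, ?_⟩
    on_goal 3 => obtain rfl := le_antisymm hy h₃; refine ⟨0, 1, ?_⟩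
    on_goal 4 => obtain rfl := le_antisymm hy h₄; refine ⟨1, 1, ?_⟩
    all_goals
      refine ⟨by norm_num, by norm_num, h₁, h₂, h₃, h₄, ?_, ?_, ?_, ?_⟩ <;>
        first
        | norm_num; done
        | exact le_add_mul_of_forall_sub_le hM (by simp) (by simp) (by norm_num)
  · rintro ⟨δ₁, δ₂, rfl | rfl, rfl | rfl, h₁, h₂, h₃, h₄, u₁, u₂, u₃, u₄⟩ <;>
      norm_num at u₁ u₂ u₃ u₄ <;> exact ⟨⟨h₁, h₂, h₃, h₄⟩, by tauto⟩
end

section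
/- Range restriction of the binary selector: let k and n be natural numbers with n ≤ 2^k, and δ : Fin k → ℝ with (δ j = 0 or δ j = 1) for every j. Writing bitⱼ(z) = 1 if Nat.testBit z j is true and 0 otherwise, the following are equivalent: (i) for every natural number z with n ≤ z and z < 2^k, the sum over j ∈ Fin k of bitⱼ(z) + (1 − 2·bitⱼ(z))·δ j is ≥ 1; (ii) the natural number represented by δ, namely Σⱼ (if δ j = 1 then 2^j else 0), is strictly less than n. -/
/-!
The summand of the mismatch sum is `0` where bit `j` of `z` agrees with `δ j` and `1` where it
does not, so the sum counts disagreements and is `≥ 1` exactly when `z` differs from the number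
`m` encoded by `δ`, both being `< 2 ^ k`. Hence (i) says that `m ∉ [n, 2 ^ k)`, i.e. `m < n`.
-/

/-- The `j`-th binary digit of `z` (least significant bit first), as a real. -/
def bitR (z j : ℕ) : ℝ := if Nat.testBit z j then 1 else 0

open Finset

theorem Nat.ne_iff_exists_testBit_ne_of_lt_two_pow {a b k : ℕ} (ha : a < 2 ^ k)
    (hb : b < 2 ^ k) : a ≠ b ↔ ∃ j : Fin k, a.testBit j ≠ b.testBit j := by
  refine ⟨fun hab => ?_, fun ⟨j, hj⟩ hab => hj (hab ▸ rfl)⟩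
  obtain ⟨i, hi⟩ := Nat.exists_testBit_ne_of_ne hab
  have hik : i < k := by
    by_contra! hki
    have h2 : 2 ^ k ≤ 2 ^ i := Nat.pow_le_pow_right two_pos hki
    rw [Nat.testBit_lt_two_pow (ha.trans_le h2), Nat.testBit_lt_two_pow (hb.trans_le h2)] at hi
    exact hi rfl
  exact ⟨⟨i, hik⟩, hi⟩

theorem Finset.one_le_sum_ite_zero_one_iff {ι R : Type*} [Semiring R] [LinearOrder R]
    [IsStrictOrderedRing R] (s : Finset ι) (P : ι → Prop) [DecidablePred P] :
    (1 : R) ≤ ∑ i ∈ s, (if P i then 0 else 1) ↔ ∃ i ∈ s, ¬ P i := by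
  simp_rw [fun i => (ite_not (P i) (1 : R) 0).symm]
  rw [sum_boole, Nat.one_le_cast, Nat.one_le_iff_ne_zero, Ne, card_eq_zero,
    ← Ne, ← nonempty_iff_ne_empty, filter_nonempty_iff]

section BinaryValue

variable {k : ℕ} (p : Fin k → Prop) [DecidablePred p]

theorem Fin.sum_ite_two_pow_eq_sum_map :
    (∑ j : Fin k, if p j then 2 ^ (j : ℕ) else 0) =
      ∑ i ∈ (univ.filter p).map Fin.valEmbedding, 2 ^ i := by
  rw [sum_map, sum_filter]
  rfl

theorem Fin.sum_ite_two_pow_lt : (∑ j : Fin k, if p j then 2 ^ (j : ℕ) else 0) < 2 ^ k := by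
  rw [Fin.sum_ite_two_pow_eq_sum_map]
  exact Nat.geomSum_lt le_rfl fun i hi => by
    obtain ⟨j, -, rfl⟩ := mem_map.1 hi
    exact j.isLt

theorem Fin.testBit_sum_ite_two_pow (j : Fin k) :
    (∑ j : Fin k, if p j then 2 ^ (j : ℕ) else 0).testBit j = decide (p j) := by
  rw [Bool.eq_iff_iff, decide_eq_true_iff, Fin.sum_ite_two_pow_eq_sum_map, ← Nat.mem_bitIndices,
    ← List.mem_toFinset, toFinset_bitIndices_sum_two_pow]
  simp [Fin.val_inj]

end BinaryValue

theorem bitR_add_mul_eq_ite {d : ℝ} (hd : d = 0 ∨ d = 1) (z j : ℕ) :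
    bitR z j + (1 - 2 * bitR z j) * d = if z.testBit j = decide (d = 1) then 0 else 1 := by
  rcases hd with rfl | rfl <;> cases hb : z.testBit j <;> norm_num [bitR, hb]

theorem one_le_sum_bitR_mismatch_iff {k z : ℕ} {δ : Fin k → ℝ} (hδ : ∀ j, δ j = 0 ∨ δ j = 1)
    (hz : z < 2 ^ k) :
    1 ≤ ∑ j : Fin k, (bitR z j + (1 - 2 * bitR z j) * δ j) ↔
      z ≠ ∑ j : Fin k, if δ j = 1 then 2 ^ (j : ℕ) else 0 := by
  rw [Nat.ne_iff_exists_testBit_ne_of_lt_two_pow hz (Fin.sum_ite_two_pow_lt _)]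
  simp_rw [bitR_add_mul_eq_ite (hδ _), Fin.testBit_sum_ite_two_pow]
  rw [one_le_sum_ite_zero_one_iff]
  simp only [mem_univ, true_and]

theorem binary_selector_range_general (k n : ℕ)
    (δ : Fin k → ℝ) (hδ : ∀ j, δ j = 0 ∨ δ j = 1) :
    (∀ z : ℕ, n ≤ z → z < 2 ^ k →
        1 ≤ ∑ j : Fin k, (bitR z j + (1 - 2 * bitR z j) * δ j)) ↔
      (∑ j : Fin k, if δ j = 1 then 2 ^ (j : ℕ) else 0) < n := by
  have hm : (∑ j : Fin k, if δ j = 1 then 2 ^ (j : ℕ) else 0) < 2 ^ k :=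
    Fin.sum_ite_two_pow_lt _
  constructor
  · intro h
    by_contra! hnm
    exact (one_le_sum_bitR_mismatch_iff hδ hm).1 (h _ hnm hm) rfl
  · intro hmn z hnz hz
    exact (one_le_sum_bitR_mismatch_iff hδ hz).2 (by omega)

/-- Range restriction of the binary selector. -/
theorem binary_selector_range (k n : ℕ) (hn : n ≤ 2 ^ k)
    (δ : Fin k → ℝ) (hδ : ∀ j, δ j = 0 ∨ δ j = 1) :
    (∀ z : ℕ, n ≤ z → z < 2 ^ k →
        1 ≤ ∑ j : Fin k, (bitR z j + (1 - 2 * bitR z j) * δ j)) ↔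
      (∑ j : Fin k, if δ j = 1 then 2 ^ (j : ℕ) else 0) < n :=
  binary_selector_range_general k n δ hδ
end

section
/- Exactness of the logarithmic max-pooling encoding: let n ≥ 1 and k be natural numbers with n ≤ 2^k, x : Fin n → ℝ, y ∈ ℝ, and M ∈ ℝ with M ≥ x i − x j for all i, j. Writing bitⱼ(z) = 1 if Nat.testBit z j is true and 0 otherwise, then y is the maximum of the values x z over z : Fin n if and only if there exists δ : Fin k → ℝ with (δ j = 0 or δ j = 1) for every j such that: (i) y ≥ x z for every z : Fin n; (ii) for every z : Fin n, y ≤ x z + M · Σⱼ (bitⱼ(z) + (1 − 2·bitⱼ(z))·δ j); and (iii) for every natural number z with n ≤ z < 2^k, Σⱼ (bitⱼ(z) + (1 − 2·bitⱼ(z))·δ j) ≥ 1. -/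
def bitMismatch {k : ℕ} (δ : Fin k → ℝ) (z : ℕ) : ℝ :=
  ∑ j : Fin k, (bitR z j + (1 - 2 * bitR z j) * δ j)

lemma bitR_eq_zero_or_eq_one (z j : ℕ) : bitR z j = 0 ∨ bitR z j = 1 := by
  unfold bitR; split_ifs <;> simp

lemma bitR_add_mul_bitR (z w j : ℕ) :
    bitR z j + (1 - 2 * bitR z j) * bitR w j = if z.testBit j = w.testBit j then 0 else 1 := by
  unfold bitR
  cases z.testBit j <;> cases w.testBit j <;> norm_num

lemma bitMismatch_bitR_self (k w : ℕ) : bitMismatch (fun j : Fin k => bitR w j) w = 0 :=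
  Finset.sum_eq_zero fun j _ => by simp [bitR_add_mul_bitR]

lemma Nat.eq_of_testBit_eq_of_lt_two_pow {k z w : ℕ} (hz : z < 2 ^ k) (hw : w < 2 ^ k)
    (h : ∀ j : Fin k, z.testBit j = w.testBit j) : z = w := by
  rw [← Nat.mod_eq_of_lt hz, ← Nat.mod_eq_of_lt hw, ← Nat.ofBits_testBit, ← Nat.ofBits_testBit]
  exact congrArg Nat.ofBits (funext h)

lemma one_le_bitMismatch_bitR {k z w : ℕ} (hz : z < 2 ^ k) (hw : w < 2 ^ k) (hzw : z ≠ w) :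
    1 ≤ bitMismatch (fun j : Fin k => bitR w j) z := by
  obtain ⟨j, hj⟩ : ∃ j : Fin k, z.testBit j ≠ w.testBit j := by
    by_contra! h
    exact hzw (Nat.eq_of_testBit_eq_of_lt_two_pow hz hw h)
  calc (1 : ℝ) = bitR z j + (1 - 2 * bitR z j) * bitR w j := by simp [bitR_add_mul_bitR, hj]
    _ ≤ ∑ i : Fin k, (bitR z i + (1 - 2 * bitR z i) * bitR w i) :=
      Finset.single_le_sum (f := fun i : Fin k => bitR z i + (1 - 2 * bitR z i) * bitR w i)
        (fun i _ => by rw [bitR_add_mul_bitR]; split_ifs <;> norm_num) (Finset.mem_univ j)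

lemma le_add_mul_bitMismatch_bitR {n k : ℕ} (hnk : n ≤ 2 ^ k) {x : Fin n → ℝ} {M : ℝ}
    (hM : ∀ i j, M ≥ x i - x j) (w z : Fin n) :
    x w ≤ x z + M * bitMismatch (fun j : Fin k => bitR w j) z := by
  rcases eq_or_ne z w with rfl | hzw
  · simp [bitMismatch_bitR_self]
  · have hM0 : 0 ≤ M := by simpa using hM w w
    have h1 := one_le_bitMismatch_bitR (k := k) (z.2.trans_le hnk) (w.2.trans_le hnk)
      (Fin.val_ne_of_ne hzw)
    linarith [hM w z, le_mul_of_one_le_right hM0 h1]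

lemma exists_lt_two_pow_bitR_eq {k : ℕ} {δ : Fin k → ℝ} (hδ : ∀ j, δ j = 0 ∨ δ j = 1) :
    ∃ w < 2 ^ k, (fun j : Fin k => bitR w j) = δ := by
  refine ⟨Nat.ofBits fun j => decide (δ j = 1), Nat.ofBits_lt_two_pow _, funext fun j => ?_⟩
  rcases hδ j with h | h <;> simp [bitR, h]

/-- Exactness of the logarithmic max-pooling encoding. -/
theorem maxpool_log_exact (n k : ℕ) (hn : 1 ≤ n) (hnk : n ≤ 2 ^ k)
    (x : Fin n → ℝ) (y : ℝ) (M : ℝ) (hM : ∀ i j, M ≥ x i - x j) :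
    y = Finset.univ.sup' ⟨⟨0, hn⟩, Finset.mem_univ _⟩ x ↔
      ∃ δ : Fin k → ℝ, (∀ j, δ j = 0 ∨ δ j = 1) ∧
        (∀ z : Fin n, y ≥ x z) ∧
        (∀ z : Fin n,
          y ≤ x z + M * ∑ j : Fin k, (bitR (z : ℕ) j + (1 - 2 * bitR (z : ℕ) j) * δ j)) ∧
        (∀ z : ℕ, n ≤ z → z < 2 ^ k →
          1 ≤ ∑ j : Fin k, (bitR z j + (1 - 2 * bitR z j) * δ j)) := by
  constructor
  · rintro rfl
    obtain ⟨w, -, hw⟩ := Finset.exists_mem_eq_sup' ⟨⟨0, hn⟩, Finset.mem_univ _⟩ x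
    refine ⟨fun j => bitR w j, fun j => bitR_eq_zero_or_eq_one w j,
      fun z => Finset.le_sup' x (Finset.mem_univ z), fun z => ?_,
      fun z hnz hz => one_le_bitMismatch_bitR hz (w.2.trans_le hnk) (by omega)⟩
    rw [hw]
    exact le_add_mul_bitMismatch_bitR hnk hM w z
  · rintro ⟨δ, hδ, hge, hle, hfree⟩
    obtain ⟨w, hw, rfl⟩ := exists_lt_two_pow_bitR_eq hδ
    have hw0 := bitMismatch_bitR_self k w
    have hwn : w < n := by
      by_contra! hnw
      have h1 : 1 ≤ bitMismatch (fun j : Fin k => bitR w j) w := hfree w hnw hw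
      linarith
    have hyw : y ≤ x ⟨w, hwn⟩ + M * bitMismatch (fun j : Fin k => bitR w j) w := hle ⟨w, hwn⟩
    refine le_antisymm ?_ (Finset.sup'_le _ _ fun z _ => hge z)
    calc y ≤ x ⟨w, hwn⟩ := by simpa [hw0] using hyw
      _ ≤ _ := Finset.le_sup' x (Finset.mem_univ _)
end

section
/- Correctness of the instantiation-selection constraints (C₃–C₄): let D be a finite set (Finset) of vectors in Fin m → ℝ, δ : (Fin m → ℝ) → ℝ a function with (δ d = 0 or δ d = 1) for every d ∈ D and Σ_{d ∈ D} δ d = 1, and λ : Fin m → ℝ a vector satisfying, for every coordinate j, Σ_{d ∈ D} (d j)·(δ d) = λ j. Then for every d ∈ D: δ d = 1 if and only if λ = d. -/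
open Finset

section ZeroOneWeights

variable {ι R : Type*} [DecidableEq R] {s : Finset ι} {f : ι → R}

theorem Finset.sum_mul_eq_sum_filter_eq_one [NonAssocSemiring R]
    (hf : ∀ i ∈ s, f i = 0 ∨ f i = 1) (g : ι → R) :
    ∑ i ∈ s, g i * f i = ∑ i ∈ s with f i = 1, g i := by
  rw [sum_filter]
  refine sum_congr rfl fun i hi => ?_
  rcases hf i hi with h | h
  · rw [h, mul_zero, eq_comm, ite_eq_right_iff]
    -- the `if` still fires when `0 = 1`, which happens only in the zero ring
    exact fun h01 => by rw [← mul_one (g i), ← h01, mul_zero]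
  · simp [h]

theorem Finset.sum_eq_card_filter_eq_one [NonAssocSemiring R]
    (hf : ∀ i ∈ s, f i = 0 ∨ f i = 1) :
    ∑ i ∈ s, f i = #{i ∈ s | f i = 1} := by
  simpa using sum_mul_eq_sum_filter_eq_one hf 1

end ZeroOneWeights

/-- Correctness of the instantiation-selection constraints (C₃–C₄). -/
theorem instantiation_selection_correct (m : ℕ) (D : Finset (Fin m → ℝ))
    (δ : (Fin m → ℝ) → ℝ) (hδ : ∀ d ∈ D, δ d = 0 ∨ δ d = 1)
    (hsum : ∑ d ∈ D, δ d = 1)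
    (lam : Fin m → ℝ) (hlam : ∀ j, ∑ d ∈ D, d j * δ d = lam j) :
    ∀ d ∈ D, (δ d = 1 ↔ lam = d) := by
  obtain ⟨d₀, hselected⟩ : ∃ d₀, {d ∈ D | δ d = 1} = {d₀} := by
    rw [← card_eq_one, ← Nat.cast_inj (R := ℝ), ← sum_eq_card_filter_eq_one hδ, hsum,
      Nat.cast_one]
  have hlam_eq : lam = d₀ := funext fun j => by
    rw [← hlam j, sum_mul_eq_sum_filter_eq_one hδ, hselected, sum_singleton]
  intro d hd
  have hselected_iff := Finset.ext_iff.mp hselected d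
  rw [mem_filter, mem_singleton] at hselected_iff
  rw [hlam_eq, eq_comm (a := d₀), ← hselected_iff, and_iff_right hd]
end
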